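/- For all n ≥ m−1, the prefix g_n of the m-bonacci word satisfies g_n = z_0 z_1 ⋯ z_{n−m} · Q(n) · z_{n−m}. -/
import Mathlib


/-- The `m`-bonacci morphism `φ_m` on letters:
`φ_m(k) = 0·(k+1)` for `0 ≤ k ≤ m-2`, and `φ_m(m-1) = 0`. -/
def phiL (m a : ℕ) : List ℕ := if a = m - 1 then [0] else [0, a + 1]

/-- The `m`-bonacci morphism applied to a finite word. -/
def phiW (m : ℕ) (u : List ℕ) : List ℕ := u.flatMap (phiL m)

/-- The iterates `h n = φ_mⁿ(0)`. -/
def hword (m : ℕ) : ℕ → List ℕ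
  | 0 => [0]
  | n + 1 => phiW m (hword m n)

/-- The `m`-bonacci word, the infinite fixed point of `φ_m` beginning with `0`
(its `i`-th letter is the `i`-th letter of any sufficiently long iterate `φ_mⁿ(0)`). -/
def mbon (m : ℕ) : ℕ → ℕ := fun i => (hword m (i + 1)).getD i 0

/-- Auxiliary course-of-values construction for the p-singular words:
`zsAux m (k+1) i` gives the correct value of the (index-shifted) p-singular word
`z_{i-1}` for every `i ≤ k`. -/
def zsAux (m : ℕ) : ℕ → ℕ → List ℕ
  | 0, _ => []
  | k + 1, i =>
    if i < k then zsAux m k i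
    else if i = 0 then []
    else if i = 1 then [0]
    else if i ≤ m then
      -- here `i = n+1` with `1 ≤ n ≤ m-1`:
      -- `z_n = z_{n-2} z_{n-3} ⋯ z_1 z_0 · n · z_0 z_1 ⋯ z_{n-3} z_{n-2}`
      (((List.range (i - 2)).map (fun j => zsAux m k (i - 2 - j))).flatten)
        ++ [i - 1]
        ++ (((List.range (i - 2)).map (fun j => zsAux m k (1 + j))).flatten)
    else
      -- here `i = n+1` with `n ≥ m`:
      -- `z_n = z_{n-2} ⋯ z_{n-(m-1)} · z_{n-m} · z_{n-(m+1)} · z_{n-m} · z_{n-(m-1)} ⋯ z_{n-2}`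
      (((List.range (m - 2)).map (fun j => zsAux m k (i - 2 - j))).flatten)
        ++ zsAux m k (i - m) ++ zsAux m k (i - m - 1) ++ zsAux m k (i - m)
        ++ (((List.range (m - 2)).map (fun j => zsAux m k (i - m + 1 + j))).flatten)

/-- The (index-shifted) p-singular words for the `m`-bonacci word:
`zsw m 0 = z₋₁ = ε`, and `zsw m (n+1) = zₙ` for `n ≥ 0`, where
`z₀ = 0`, `zₙ = z_{n-2} z_{n-3} ⋯ z_1 z_0 · n · z_0 z_1 ⋯ z_{n-3} z_{n-2}` for `1 ≤ n ≤ m-1`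
(`n` denoting the single letter `n`), and
`zₙ = z_{n-2} z_{n-3} ⋯ z_{n-(m-1)} z_{n-m} z_{n-(m+1)} z_{n-m} z_{n-(m-1)} ⋯ z_{n-3} z_{n-2}`
for `n ≥ m`. -/
def zsw (m k : ℕ) : List ℕ := zsAux m (k + 1) k
/-- For `n ≥ m-2`, `Qword m n` is the word
`Q(n) = z_{n-(m-1)} z_{n-(m-2)} ⋯ z_{n-1} zₙ z_{n-1} ⋯ z_{n-(m-2)} z_{n-(m-1)}`
(in the shifted indexing `zₖ = zsw m (k+1)`). -/
def Qword (m n : ℕ) : List ℕ :=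
  (((List.range (m - 1)).map (fun j => zsw m (n + 2 - m + j))).flatten)
    ++ zsw m (n + 1)
    ++ (((List.range (m - 1)).map (fun j => zsw m (n - j))).flatten)

/-- The word `p_m = z_0 z_1 ⋯ z_{m-3} z_{m-2} z_{m-3} ⋯ z_1 z_0 · (m-1)`. -/
def pword (m : ℕ) : List ℕ :=
  (((List.range (m - 2)).map (fun j => zsw m (j + 1))).flatten)
    ++ zsw m (m - 1)
    ++ (((List.range (m - 2)).map (fun j => zsw m (m - 2 - j))).flatten)
    ++ [m - 1]

/-- For `n ≥ m-2`, the prefix `g_n = p_m · ∏_{m-2 ≤ k ≤ n-1} Q(k)` of the `m`-bonacci word. -/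
def gwordM (m n : ℕ) : List ℕ :=
  pword m ++ (((List.range (n - (m - 2))).map (fun j => Qword m (m - 2 + j))).flatten)


/-- Ascending-index block: `zsw m a · zsw m (a+1) ⋯ zsw m (a+b-1)`. -/
def Aw (m a b : ℕ) : List ℕ := ((List.range b).map (fun j => zsw m (a + j))).flatten
/-- Descending-index block: `zsw m a · zsw m (a-1) ⋯ zsw m (a-b+1)`. -/
def Dw (m a b : ℕ) : List ℕ := ((List.range b).map (fun j => zsw m (a - j))).flatten
/-- The initial block `z₀ z₁ ⋯ z_{k-1}` (i.e. `zsw m 1 ⋯ zsw m k`). -/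
def ZZ (m k : ℕ) : List ℕ := ((List.range k).map (fun j => zsw m (j + 1))).flatten

lemma Aw_succ (m a b : ℕ) : Aw m a (b+1) = Aw m a b ++ zsw m (a+b) := by
  simp [Aw, List.range_succ]

lemma Aw_succ' (m a b : ℕ) : Aw m a (b+1) = zsw m a ++ Aw m (a+1) b := by
  simp only [Aw, List.range_succ_eq_map, List.map_cons, List.map_map, List.flatten_cons,
    Nat.add_zero, Function.comp]
  congr 2
  apply List.map_congr_left
  intro j _
  exact congrArg (zsw m) (by omega)

lemma Dw_succ (m a b : ℕ) : Dw m a (b+1) = Dw m a b ++ zsw m (a-b) := by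
  simp [Dw, List.range_succ]

lemma Dw_succ' (m a b : ℕ) : Dw m a (b+1) = zsw m a ++ Dw m (a-1) b := by
  simp only [Dw, List.range_succ_eq_map, List.map_cons, List.map_map, List.flatten_cons,
    Nat.sub_zero, Function.comp]
  congr 2
  apply List.map_congr_left
  intro j _
  exact congrArg (zsw m) (by omega)

lemma ZZ_succ (m k : ℕ) : ZZ m (k+1) = ZZ m k ++ zsw m (k+1) := by
  simp [ZZ, List.range_succ]

lemma ZZ_eq_Aw (m k : ℕ) : ZZ m k = Aw m 1 k := by
  unfold ZZ Aw
  congr 1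
  apply List.map_congr_left
  intro j _
  exact congrArg (zsw m) (by omega)

lemma zsAux_stable (m : ℕ) : ∀ k i, i ≤ k → zsAux m (k+1) i = zsw m i := by
  intro k
  induction k with
  | zero => intro i hi; interval_cases i; rfl
  | succ k ih =>
    intro i hi
    rcases Nat.lt_or_ge i (k+1) with h | h
    · have h' : i ≤ k := by omega
      rw [show zsAux m (k+1+1) i = zsAux m (k+1) i from by rw [zsAux]; rw [if_pos h]]
      exact ih i h'
    · have : i = k + 1 := by omega
      subst this; rfl

lemma zsw_zero (m : ℕ) : zsw m 0 = [] := rfl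

lemma zsw_rec_small (m i : ℕ) (h2 : 2 ≤ i) (him : i ≤ m) :
    zsw m i = Dw m (i-2) (i-2) ++ [i-1] ++ Aw m 1 (i-2) := by
  have hst : ∀ x, x ≤ i - 1 → zsAux m i x = zsw m x := by
    intro x hx
    have := zsAux_stable m (i-1) x hx
    rwa [show i-1+1 = i by omega] at this
  show zsAux m (i+1) i = _
  rw [zsAux, if_neg (lt_irrefl i), if_neg (by omega), if_neg (by omega), if_pos him]
  rw [List.map_congr_left (l := List.range (i-2))
      (f := fun j => zsAux m i (i-2-j)) (g := fun j => zsw m (i-2-j))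
      (fun j hj => hst _ (by omega)),
    List.map_congr_left (l := List.range (i-2))
      (f := fun j => zsAux m i (1+j)) (g := fun j => zsw m (1+j))
      (fun j hj => hst _ (by have := List.mem_range.mp hj; omega))]
  rfl

lemma zsw_rec_big (m i : ℕ) (hm : 2 ≤ m) (hi : m < i) :
    zsw m i = Dw m (i-2) (m-2) ++ zsw m (i-m) ++ zsw m (i-m-1) ++ zsw m (i-m)
      ++ Aw m (i-m+1) (m-2) := by
  have hst : ∀ x, x ≤ i - 1 → zsAux m i x = zsw m x := by
    intro x hx
    have := zsAux_stable m (i-1) x hx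
    rwa [show i-1+1 = i by omega] at this
  show zsAux m (i+1) i = _
  rw [zsAux, if_neg (lt_irrefl i), if_neg (by omega), if_neg (by omega), if_neg (by omega)]
  rw [List.map_congr_left (l := List.range (m-2))
      (f := fun j => zsAux m i (i-2-j)) (g := fun j => zsw m (i-2-j))
      (fun j hj => hst _ (by omega)),
    List.map_congr_left (l := List.range (m-2))
      (f := fun j => zsAux m i (i-m+1+j)) (g := fun j => zsw m (i-m+1+j))
      (fun j hj => hst _ (by have := List.mem_range.mp hj; omega)),
    hst _ (by omega), hst _ (by omega)]
  rfl

lemma Qword_eq (m n : ℕ) :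
    Qword m n = Aw m (n+2-m) (m-1) ++ zsw m (n+1) ++ Dw m n (m-1) := rfl

lemma pword_eq (m : ℕ) :
    pword m = ZZ m (m-2) ++ zsw m (m-1) ++ Dw m (m-2) (m-2) ++ [m-1] := rfl

lemma key_ident (m n : ℕ) (hm : 2 ≤ m) (hn : m - 1 ≤ n) :
    Qword m n ++ zsw m (n+1-m) ++ Qword m n
      = zsw m (n+2-m) ++ Qword m (n+1) ++ zsw m (n+2-m) := by
  have h1 : Qword m n = zsw m (n+2-m) ++ Aw m (n+3-m) (m-2) ++ zsw m (n+1)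
      ++ (Dw m n (m-2) ++ zsw m (n+2-m)) := by
    rw [Qword_eq, show m-1 = (m-2)+1 by omega, Aw_succ', Dw_succ,
      show n+2-m+1 = n+3-m by omega, show n-(m-2) = n+2-m by omega]
  have h2 : Qword m (n+1) = Aw m (n+3-m) (m-2) ++ zsw m (n+1) ++ zsw m (n+2)
      ++ (zsw m (n+1) ++ Dw m n (m-2)) := by
    rw [Qword_eq, show n+1+2-m = n+3-m by omega, show m-1 = (m-2)+1 by omega,
      Aw_succ, Dw_succ', show n+3-m+(m-2) = n+1 by omega,
      show n+1-1 = n by omega]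
  have h3 : zsw m (n+2) = Dw m n (m-2) ++ zsw m (n+2-m) ++ zsw m (n+1-m)
      ++ zsw m (n+2-m) ++ Aw m (n+3-m) (m-2) := by
    rw [zsw_rec_big m (n+2) hm (by omega), show n+2-2 = n by omega,
      show n+2-m-1 = n+1-m by omega, show n+2-m+1 = n+3-m by omega]
  rw [h1, h2, h3]
  simp [List.append_assoc]

lemma gwordM_succ (m n : ℕ) (h : m - 2 ≤ n) :
    gwordM m (n+1) = gwordM m n ++ Qword m n := by
  unfold gwordM
  rw [show n+1-(m-2) = (n-(m-2))+1 by omega, List.range_succ]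
  simp only [List.map_append, List.map_cons, List.map_nil, List.flatten_append,
    List.flatten_cons, List.flatten_nil, List.append_nil, List.append_assoc]
  rw [show m-2+(n-(m-2)) = n by omega]

lemma base_case (m : ℕ) (hm : 2 ≤ m) :
    pword m ++ Qword m (m-2) = Qword m (m-1) := by
  have q2 : Qword m (m-2) = Aw m 1 (m-2) ++ zsw m (m-1) ++ Dw m (m-2) (m-2) := by
    rw [Qword_eq, show m-2+2-m = 0 by omega, show m-2+1 = m-1 by omega,
      show m-1 = (m-2)+1 by omega, Aw_succ', Dw_succ]
    simp [zsw_zero]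
  have q1 : Qword m (m-1) = Aw m 1 (m-2) ++ zsw m (m-1) ++ zsw m m
      ++ (zsw m (m-1) ++ Dw m (m-2) (m-2)) := by
    rw [Qword_eq, show m-1+2-m = 1 by omega, show m-1+1 = m by omega,
      show m-1 = (m-2)+1 by omega, Aw_succ, Dw_succ']
    rw [show (1:ℕ)+(m-2) = (m-2)+1 by omega, show (m-2)+1-1 = m-2 by omega]
  have hsm : zsw m m = Dw m (m-2) (m-2) ++ [m-1] ++ Aw m 1 (m-2) :=
    zsw_rec_small m m hm le_rfl
  rw [pword_eq, ZZ_eq_Aw, q2, q1, hsm]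
  simp [List.append_assoc]

/-- For all `n ≥ m-1`, the prefix `g_n` of the `m`-bonacci word satisfies
`g_n = z₀ z₁ ⋯ z_{n-m} · Q(n) · z_{n-m}` (recall `z_{n-m} = zsw m (n+1-m)`). -/
theorem gwordM_eq (m : ℕ) (hm : 2 ≤ m) (n : ℕ) (hn : m - 1 ≤ n) :
    gwordM m n = (((List.range (n + 1 - m)).map (fun j => zsw m (j + 1))).flatten)
      ++ Qword m n ++ zsw m (n + 1 - m) := by
  induction n, hn using Nat.le_induction with
  | base =>
    have h1 : gwordM m (m-1) = pword m ++ Qword m (m-2) := by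
      unfold gwordM
      rw [show m-1-(m-2) = 1 by omega]
      simp [List.range_succ]
    rw [h1, base_case m hm, show m-1+1-m = 0 by omega]
    simp [zsw_zero]
  | succ n hn ih =>
    rw [gwordM_succ m n (by omega), ih, show n+1+1-m = n+2-m by omega]
    have hZ : ((List.range (n+2-m)).map (fun j => zsw m (j+1))).flatten
        = ((List.range (n+1-m)).map (fun j => zsw m (j+1))).flatten ++ zsw m (n+2-m) := by
      rw [show n+2-m = (n+1-m)+1 by omega, List.range_succ]
      simp
    rw [hZ]
    have hk := key_ident m n hm hn
    simp only [List.append_assoc] at hk ⊢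
    rw [hk]
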